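/- Suppose Γ is an E-complete maximally tableau FOLP_CS-consistent set of closed Par-formulas, and let E be defined by E(t) = { A : ¬t:_{Par(A)} A ∉ Γ }. Then E satisfies the Instantiation Condition E6: if A(x) ∈ E(t) and u is any parameter, then A(u) ∈ E(t), where A(u) is the result of substituting u for the free individual variable x in A(x). -/

import Mathlib

open scoped Classical

/-- Justification terms of FOLP, built from justification variables `jvar i`,
justification constants `jconst i`, and the operations `+`, `·`, `!`, `genₓ`. -/
inductive Tm : Type
  | jvar : ℕ → Tm
  | jconst : ℕ → Tm
  | plus : Tm → Tm → Tm
  | app : Tm → Tm → Tm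
  | bang : Tm → Tm
  | gen : ℕ → Tm → Tm
  deriving DecidableEq

/-- FOLP formulas with extra individual constants from `K` (`K`-formulas).
Individual variables are natural numbers; an argument `Sum.inl x` is an individual
variable, `Sum.inr a` is an element of `K`.  Predicate symbols are indexed by `ℕ`.
Plain FOLP formulas are `Fm Empty`, Par-formulas are `Fm ℕ` (the parameters being a
separate copy of ℕ, namely the `Sum.inr` part), and `D`-formulas are `Fm D`.
`just t X A` is the justification assertion `t :_X A`. -/
inductive Fm (K : Type) : Type
  | pred : ℕ → List (ℕ ⊕ K) → Fm K
  | neg : Fm K → Fm K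
  | imp : Fm K → Fm K → Fm K
  | all : ℕ → Fm K → Fm K
  | ex : ℕ → Fm K → Fm K
  | just : Tm → Finset (ℕ ⊕ K) → Fm K → Fm K

namespace Fm

variable {K K' : Type}

/-- Free individual variables of a `K`-formula.  Recall that
`FVar (t :_X A) = X` (more precisely, the individual-variable part of `X`). -/
noncomputable def fvar : Fm K → Finset ℕ
  | pred _ args => (args.filterMap Sum.getLeft?).toFinset
  | neg A => A.fvar
  | imp A B => A.fvar ∪ B.fvar
  | all x A => A.fvar.erase x
  | ex x A => A.fvar.erase x
  | just _ X _ => (X.toList.filterMap Sum.getLeft?).toFinset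

/-- The elements of `K` occurring in a `K`-formula (for `K = Par` this is `Par(A)`,
for `K = D` this is `D(A)`). -/
noncomputable def kocc : Fm K → Finset K
  | pred _ args => (args.filterMap Sum.getRight?).toFinset
  | neg A => A.kocc
  | imp A B => A.kocc ∪ B.kocc
  | all _ A => A.kocc
  | ex _ A => A.kocc
  | just _ X A => A.kocc ∪ (X.toList.filterMap Sum.getRight?).toFinset

/-- A `K`-formula is closed if it contains no free occurrences of individual variables. -/
def Closed (A : Fm K) : Prop := A.fvar = ∅

/-- Action of a partial substitution (of elements of `K` for individual variables)
on variables/`K`-elements. -/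
def subK (σ : ℕ → Option K) : ℕ ⊕ K → ℕ ⊕ K
  | .inl x => (σ x).elim (.inl x) .inr
  | .inr a => .inr a

/-- Simultaneous substitution of elements of `K` for free individual variables.
In `t :_X A` only the variables belonging to `X` are free, so only those get
substituted (both inside `X` and inside `A`). -/
noncomputable def msubst (σ : ℕ → Option K) : Fm K → Fm K
  | pred Q args => pred Q (args.map (subK σ))
  | neg A => neg (A.msubst σ)
  | imp A B => imp (A.msubst σ) (B.msubst σ)
  | all x A => all x (A.msubst fun y => if y = x then none else σ y)
  | ex x A => ex x (A.msubst fun y => if y = x then none else σ y)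
  | just t X A =>
      just t (X.image (subK σ)) (A.msubst fun y => if Sum.inl y ∈ X then σ y else none)

/-- `A.subst1 x a` is `A(a)`, i.e. `A{x/a}`: the result of replacing all free
occurrences of the individual variable `x` by the element `a : K`. -/
noncomputable def subst1 (x : ℕ) (a : K) (A : Fm K) : Fm K :=
  A.msubst fun y => if y = x then some a else none

/-- Action of a variable-for-variable substitution on arguments. -/
def subVV (x y : ℕ) : ℕ ⊕ K → ℕ ⊕ K
  | .inl z => if z = x then .inl y else .inl z
  | .inr a => .inr a

/-- `A.vsubst x y` is `A{x/y}`: substitution of the individual variable `y` for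
the free occurrences of the individual variable `x`. -/
noncomputable def vsubst (x y : ℕ) : Fm K → Fm K
  | pred Q args => pred Q (args.map (subVV x y))
  | neg A => neg (A.vsubst x y)
  | imp A B => imp (A.vsubst x y) (B.vsubst x y)
  | all z A => if z = x then all z A else all z (A.vsubst x y)
  | ex z A => if z = x then ex z A else ex z (A.vsubst x y)
  | just t X A =>
      if Sum.inl x ∈ X then just t (X.image (subVV x y)) (A.vsubst x y) else just t X A

/-- `FreeFor y x A`: the variable `y` is substitutable for the variable `x` in `A`
(no free occurrence of `x` lies in the scope of a quantifier binding `y`). -/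
def FreeFor (y x : ℕ) : Fm K → Prop
  | pred _ _ => True
  | neg A => FreeFor y x A
  | imp A B => FreeFor y x A ∧ FreeFor y x B
  | all z A => x = z ∨ x ∉ A.fvar ∨ (y ≠ z ∧ FreeFor y x A)
  | ex z A => x = z ∨ x ∉ A.fvar ∨ (y ≠ z ∧ FreeFor y x A)
  | just _ X A => Sum.inl x ∈ X → FreeFor y x A

/-- Action of a renaming on arguments. -/
def subR (σ : ℕ → ℕ) : ℕ ⊕ K → ℕ ⊕ K
  | .inl x => .inl (σ x)
  | .inr a => .inr a

/-- Renaming of all (free and bound) individual variables. -/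
noncomputable def rename (σ : ℕ → ℕ) : Fm K → Fm K
  | pred Q args => pred Q (args.map (subR σ))
  | neg A => neg (A.rename σ)
  | imp A B => imp (A.rename σ) (B.rename σ)
  | all x A => all (σ x) (A.rename σ)
  | ex x A => ex (σ x) (A.rename σ)
  | just t X A => just t (X.image (subR σ)) (A.rename σ)

/-- Mapping the extra individual constants of a `K`-formula along `f : K → K'`. -/
noncomputable def kmap (f : K → K') : Fm K → Fm K'
  | pred Q args => pred Q (args.map (Sum.map id f))
  | neg A => neg (A.kmap f)
  | imp A B => imp (A.kmap f) (B.kmap f)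
  | all x A => all x (A.kmap f)
  | ex x A => ex x (A.kmap f)
  | just t X A => just t (X.image (Sum.map id f)) (A.kmap f)

/-- A size measure used for the well-founded recursion defining truth. -/
noncomputable def size : Fm K → ℕ
  | pred _ _ => 0
  | neg A => A.size + 1
  | imp A B => A.size + B.size + 1
  | all _ A => A.size + 1
  | ex _ A => A.size + 1
  | just _ _ A => A.size + A.fvar.card + 1


theorem fvar_msubst_subset (σ : ℕ → Option K) (A : Fm K) :
    (A.msubst σ).fvar ⊆ A.fvar := by
  induction A generalizing σ with
  | pred Q args =>
      intro y hy
      simp only [msubst, fvar, List.mem_toFinset, List.mem_filterMap, List.mem_map] at hy ⊢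
      obtain ⟨s, ⟨a, ha, rfl⟩, hget⟩ := hy
      cases a with
      | inl z =>
          cases hσ : σ z with
          | none =>
              simp [subK, hσ] at hget
              exact ⟨Sum.inl z, ha, by simp [hget]⟩
          | some b => simp [subK, hσ] at hget
      | inr b => simp [subK] at hget
  | neg A ih => exact ih σ
  | imp A B ihA ihB =>
      simp only [msubst, fvar]
      exact Finset.union_subset_union (ihA σ) (ihB σ)
  | all x A ih =>
      simp only [msubst, fvar]
      exact Finset.erase_subset_erase x (ih _)
  | ex x A ih =>
      simp only [msubst, fvar]
      exact Finset.erase_subset_erase x (ih _)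
  | just t X A ih =>
      intro y hy
      simp only [msubst, fvar, List.mem_toFinset, List.mem_filterMap,
        Finset.mem_toList, Finset.mem_image] at hy ⊢
      obtain ⟨s, ⟨a, ha, rfl⟩, hget⟩ := hy
      cases a with
      | inl z =>
          cases hσ : σ z with
          | none =>
              refine ⟨Sum.inl z, ha, ?_⟩
              simp only [subK, hσ, Option.elim] at hget
              simpa using hget
          | some b => simp [subK, hσ] at hget
      | inr b => simp [subK] at hget

theorem size_msubst_le (σ : ℕ → Option K) (A : Fm K) :
    (A.msubst σ).size ≤ A.size := by
  induction A generalizing σ with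
  | pred Q args => simp [msubst, size]
  | neg A ih => simpa [msubst, size] using ih σ
  | imp A B ihA ihB =>
      simp only [msubst, size]
      have := ihA σ; have := ihB σ; omega
  | all x A ih => simpa [msubst, size] using ih _
  | ex x A ih => simpa [msubst, size] using ih _
  | just t X A ih =>
      simp only [msubst, size]
      have h1 := ih (fun y => if Sum.inl y ∈ X then σ y else none)
      have h2 := Finset.card_le_card
        (fvar_msubst_subset (fun y => if Sum.inl y ∈ X then σ y else none) A)
      omega

theorem size_subst1_le (x : ℕ) (a : K) (A : Fm K) : (A.subst1 x a).size ≤ A.size :=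
  size_msubst_le _ A


/-- `∀A`, the universal closure of `A`. -/
noncomputable def univClosure (A : Fm K) : Fm K :=
  (A.fvar.sort (· ≤ ·)).foldr Fm.all A

theorem size_foldr_all (l : List ℕ) (A : Fm K) :
    (l.foldr Fm.all A).size = A.size + l.length := by
  induction l with
  | nil => simp
  | cons z l ih => simp only [List.foldr, size, ih, List.length_cons]; omega

theorem size_univClosure (A : Fm K) :
    A.univClosure.size = A.size + A.fvar.card := by
  simp [univClosure, size_foldr_all, Finset.length_sort]

end Fm

/-- Embedding plain FOLP formulas into `K`-formulas. -/
noncomputable def toK {K : Type} : Fm Empty → Fm K := Fm.kmap (fun a => a.elim)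

/-- Two FOLP formulas are variable variants if each can be turned into the other
by a renaming of free and bound individual variables. -/
def VariableVariant (A B : Fm Empty) : Prop := ∃ σ : Equiv.Perm ℕ, B = A.rename σ

/-- The axioms of FOLP: a complete list of first order axiom schemes together
with the justification axiom schemes Ctr, Exp, Sum, jK, jT, j4, Gen. -/
inductive FOLPAxiom : Fm Empty → Prop
  | p1 (A B : Fm Empty) : FOLPAxiom (A.imp (B.imp A))
  | p2 (A B C : Fm Empty) : FOLPAxiom ((A.imp (B.imp C)).imp ((A.imp B).imp (A.imp C)))
  | p3 (A B : Fm Empty) : FOLPAxiom (((A.neg).imp (B.neg)).imp (B.imp A))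
  | allElim (x y : ℕ) (A : Fm Empty) : Fm.FreeFor y x A → FOLPAxiom ((Fm.all x A).imp (A.vsubst x y))
  | allImp (x : ℕ) (A B : Fm Empty) : x ∉ A.fvar →
      FOLPAxiom ((Fm.all x (A.imp B)).imp (A.imp (Fm.all x B)))
  | exIntro (x y : ℕ) (A : Fm Empty) : Fm.FreeFor y x A → FOLPAxiom ((A.vsubst x y).imp (Fm.ex x A))
  | exElim (x : ℕ) (A B : Fm Empty) : x ∉ B.fvar →
      FOLPAxiom ((Fm.all x (A.imp B)).imp ((Fm.ex x A).imp B))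
  | ctr (t : Tm) (X : Finset (ℕ ⊕ Empty)) (A : Fm Empty) (y : ℕ) : Sum.inl y ∉ X → y ∉ A.fvar →
      FOLPAxiom ((Fm.just t (insert (Sum.inl y) X) A).imp (Fm.just t X A))
  | exp (t : Tm) (X : Finset (ℕ ⊕ Empty)) (A : Fm Empty) (y : ℕ) : Sum.inl y ∉ X →
      FOLPAxiom ((Fm.just t X A).imp (Fm.just t (insert (Sum.inl y) X) A))
  | sum1 (s t : Tm) (X : Finset (ℕ ⊕ Empty)) (A : Fm Empty) : FOLPAxiom ((Fm.just s X A).imp (Fm.just (Tm.plus s t) X A))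
  | sum2 (s t : Tm) (X : Finset (ℕ ⊕ Empty)) (A : Fm Empty) : FOLPAxiom ((Fm.just s X A).imp (Fm.just (Tm.plus t s) X A))
  | jK (s t : Tm) (X : Finset (ℕ ⊕ Empty)) (A B : Fm Empty) : FOLPAxiom ((Fm.just s X (A.imp B)).imp
      ((Fm.just t X A).imp (Fm.just (Tm.app s t) X B)))
  | jT (t : Tm) (X : Finset (ℕ ⊕ Empty)) (A : Fm Empty) : FOLPAxiom ((Fm.just t X A).imp A)
  | j4 (t : Tm) (X : Finset (ℕ ⊕ Empty)) (A : Fm Empty) : FOLPAxiom ((Fm.just t X A).imp (Fm.just (Tm.bang t) X (Fm.just t X A)))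
  | gen (t : Tm) (X : Finset (ℕ ⊕ Empty)) (A : Fm Empty) (x : ℕ) : Sum.inl x ∉ X →
      FOLPAxiom ((Fm.just t X A).imp (Fm.just (Tm.gen x t) X (Fm.all x A)))

/-- A constant specification is a set of pairs `(c, A)`, read `c : A`
(that is, `c :_∅ A`), where `A` is an axiom instance. -/
def ConstantSpec (CS : Set (ℕ × Fm Empty)) : Prop := ∀ p ∈ CS, FOLPAxiom p.2

/-- `CS` is axiomatically appropriate: every axiom instance has a constant justifying it. -/
def AxiomaticallyAppropriate (CS : Set (ℕ × Fm Empty)) : Prop :=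
  ∀ A, FOLPAxiom A → ∃ c, (c, A) ∈ CS

/-- `CS` is variant closed. -/
def VariantClosed (CS : Set (ℕ × Fm Empty)) : Prop :=
  ∀ c A B, VariableVariant A B → ((c, A) ∈ CS ↔ (c, B) ∈ CS)

/-- Derivability in the axiomatic system `FOLP_CS`:  axioms, axiom necessitation
restricted to `CS`, modus ponens, and universal generalization. -/
inductive Deriv (CS : Set (ℕ × Fm Empty)) : Fm Empty → Prop
  | ax {A : Fm Empty} : FOLPAxiom A → Deriv CS A
  | an {c : ℕ} {A : Fm Empty} : (c, A) ∈ CS → Deriv CS (Fm.just (Tm.jconst c) ∅ A)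
  | mp {A B : Fm Empty} : Deriv CS (A.imp B) → Deriv CS A → Deriv CS B
  | ug {A : Fm Empty} (x : ℕ) : Deriv CS A → Deriv CS (Fm.all x A)

/-- A Mkrtychev model of `FOLP_CS` with domain `D`:  an interpretation `I` of the
predicate symbols and an admissible evidence function `E` satisfying E1–E6. -/
structure MModel (CS : Set (ℕ × Fm Empty)) (D : Type) : Type where
  dom_nonempty : Nonempty D
  I : ℕ → Set (List D)
  E : Tm → Set (Fm D)
  e1 : ∀ c A, (c, A) ∈ CS → toK A ∈ E (Tm.jconst c)
  e2 : ∀ s t (A B : Fm D), Fm.imp A B ∈ E s → A ∈ E t → B ∈ E (Tm.app s t)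
  e3 : ∀ s t, E s ∪ E t ⊆ E (Tm.plus s t)
  e4 : ∀ t (A : Fm D) (X : Finset D), A ∈ E t → A.kocc ⊆ X →
      Fm.just t (X.image Sum.inr) A ∈ E (Tm.bang t)
  e5 : ∀ t (x : ℕ) (A : Fm D), A ∈ E t → Fm.all x A ∈ E (Tm.gen x t)
  e6 : ∀ t (A : Fm D) (x : ℕ) (a : D), A ∈ E t → A.subst1 x a ∈ E t

/-- Truth of a (closed) `D`-formula in a Mkrtychev model. -/
noncomputable def MModel.Sat {CS : Set (ℕ × Fm Empty)} {D : Type} (M : MModel CS D) :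
    Fm D → Prop
  | .pred Q args => ∃ as : List D, args = as.map Sum.inr ∧ as ∈ M.I Q
  | .neg A => ¬ M.Sat A
  | .imp A B => M.Sat A → M.Sat B
  | .all x A => ∀ a : D, M.Sat (A.subst1 x a)
  | .ex x A => ∃ a : D, M.Sat (A.subst1 x a)
  | .just t _ A => A ∈ M.E t ∧ M.Sat A.univClosure
  termination_by F => F.size
  decreasing_by
    all_goals simp only [Fm.size, Fm.size_univClosure]
    all_goals first
      | omega
      | exact Nat.lt_succ_of_le (Fm.size_subst1_le _ _ _)

/-- Truth of an FOLP sentence in a Mkrtychev model. -/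
noncomputable def MModel.SatSentence {CS : Set (ℕ × Fm Empty)} {D : Type}
    (M : MModel CS D) (F : Fm Empty) : Prop := M.Sat (toK F)

/-- A sentence is `FOLP_CS`-valid if it is true in every Mkrtychev model of `FOLP_CS`. -/
def FOLPValid (CS : Set (ℕ × Fm Empty)) (F : Fm Empty) : Prop :=
  ∀ (D : Type) (M : MModel CS D), M.SatSentence F

/-- Satisfiability of a closed Par-formula `A(u₁,…,uₙ)` in a model:
`M ⊩ A(a₁,…,aₙ)` for some `a₁,…,aₙ ∈ D`. -/
noncomputable def MModel.SatPar {CS : Set (ℕ × Fm Empty)} {D : Type}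
    (M : MModel CS D) (F : Fm ℕ) : Prop :=
  ∃ g : ℕ → D, M.Sat (F.kmap g)

/-- `X ⊆ Par`: the set `X` consists of parameters only. -/
def XPar (X : Finset (ℕ ⊕ ℕ)) : Prop := ∀ s ∈ X, ∃ u : ℕ, s = Sum.inr u

/-- One application of an FOLP tableau rule to a branch (represented by the set `S`
of closed Par-formulas occurring on it), producing the list of extended branches
(one branch for a non-branching rule, two for a branching rule). -/
inductive TabRule : Set (Fm ℕ) → List (Set (Fm ℕ)) → Prop
  | fneg {S A} : Fm.neg (Fm.neg A) ∈ S → TabRule S [insert A S]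
  | timp {S A B} : Fm.imp A B ∈ S → TabRule S [insert (Fm.neg A) S, insert B S]
  | fimp {S A B} : Fm.neg (Fm.imp A B) ∈ S → TabRule S [insert A (insert (Fm.neg B) S)]
  | tall {S x A} (u : ℕ) : Fm.all x A ∈ S → TabRule S [insert (A.subst1 x u) S]
  | fex {S x A} (u : ℕ) : Fm.neg (Fm.ex x A) ∈ S →
      TabRule S [insert (Fm.neg (A.subst1 x u)) S]
  | tex {S x A} (u : ℕ) : Fm.ex x A ∈ S → (∀ F ∈ S, u ∉ F.kocc) →
      TabRule S [insert (A.subst1 x u) S]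
  | fall {S x A} (u : ℕ) : Fm.neg (Fm.all x A) ∈ S → (∀ F ∈ S, u ∉ F.kocc) →
      TabRule S [insert (Fm.neg (A.subst1 x u)) S]
  | tcolon {S t X A} : Fm.just t X A ∈ S → XPar X → TabRule S [insert A.univClosure S]
  | fplus {S t s X A} : Fm.neg (Fm.just (Tm.plus t s) X A) ∈ S → XPar X →
      TabRule S [insert (Fm.neg (Fm.just t X A)) (insert (Fm.neg (Fm.just s X A)) S)]
  | fapp {S s t X B} (A : Fm ℕ) : Fm.neg (Fm.just (Tm.app s t) X B) ∈ S → XPar X →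
      (∀ u ∈ A.kocc, Sum.inr u ∈ X) →
      TabRule S [insert (Fm.neg (Fm.just s X (A.imp B))) S,
                 insert (Fm.neg (Fm.just t X A)) S]
  | fbang {S t X A} : Fm.neg (Fm.just (Tm.bang t) X (Fm.just t X A)) ∈ S → XPar X →
      TabRule S [insert (Fm.neg (Fm.just t X A)) S]
  | ctr {S t X A} (u : ℕ) : Fm.neg (Fm.just t X A) ∈ S → XPar X → Sum.inr u ∉ X →
      TabRule S [insert (Fm.neg (Fm.just t (insert (Sum.inr u) X) A)) S]
  | exp {S t X A} (u : ℕ) : Fm.neg (Fm.just t (insert (Sum.inr u) X) A) ∈ S →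
      XPar X → Sum.inr u ∉ X → u ∉ A.kocc →
      TabRule S [insert (Fm.neg (Fm.just t X A)) S]
  | ins {S t X A} (x u : ℕ) : Fm.neg (Fm.just t X (A.subst1 x u)) ∈ S → XPar X →
      TabRule S [insert (Fm.neg (Fm.just t X A)) S]
  | genx {S t X A x} : Fm.neg (Fm.just (Tm.gen x t) X (Fm.all x A)) ∈ S → XPar X →
      TabRule S [insert (Fm.neg (Fm.just t X A)) S]

/-- `ClosedTableau CS S`: there is a closed `FOLP_CS`-tableau beginning with the
formulas of `S`.  A branch closes if it contains both `A` and `¬A`, or contains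
`¬c:A` with `c:A ∈ CS`. -/
inductive ClosedTableau (CS : Set (ℕ × Fm Empty)) : Set (Fm ℕ) → Prop
  | close {S A} : A ∈ S → Fm.neg A ∈ S → ClosedTableau CS S
  | closeCS {S c A} : (c, A) ∈ CS →
      Fm.neg (Fm.just (Tm.jconst c) ∅ (toK A)) ∈ S → ClosedTableau CS S
  | step {S l} : TabRule S l → (∀ S' ∈ l, ClosedTableau CS S') → ClosedTableau CS S

/-- An `FOLP_CS`-tableau proof of the sentence `F`: a closed tableau beginning
with `¬F`. -/
def TabProof (CS : Set (ℕ × Fm Empty)) (F : Fm Empty) : Prop :=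
  ClosedTableau CS {Fm.neg (toK F)}

/-- A set of closed Par-formulas is tableau `FOLP_CS`-consistent if no finite
subset of it has a closed `FOLP_CS`-tableau. -/
def TabConsistent (CS : Set (ℕ × Fm Empty)) (Γ : Set (Fm ℕ)) : Prop :=
  ∀ S : Set (Fm ℕ), S ⊆ Γ → S.Finite → ¬ ClosedTableau CS S

/-- `Γ` is maximal: it has no proper tableau consistent extension by closed Par-formulas. -/
def MaximalCons (CS : Set (ℕ × Fm Empty)) (Γ : Set (Fm ℕ)) : Prop :=
  TabConsistent CS Γ ∧
    ∀ Δ : Set (Fm ℕ), Γ ⊆ Δ → (∀ F ∈ Δ, F.Closed) → TabConsistent CS Δ → Δ = Γ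

/-- `Γ` is E-complete (with parameters as witnesses). -/
def EComplete (Γ : Set (Fm ℕ)) : Prop :=
  (∀ (x : ℕ) (A : Fm ℕ), Fm.ex x A ∈ Γ → ∃ u : ℕ, A.subst1 x u ∈ Γ) ∧
  (∀ (x : ℕ) (A : Fm ℕ), Fm.neg (Fm.all x A) ∈ Γ → ∃ u : ℕ, Fm.neg (A.subst1 x u) ∈ Γ)

/-- The interpretation of the canonical model determined by `Γ`:
`I(Q) = { (u₁,…,uₙ) | Q(u₁,…,uₙ) ∈ Γ }`. -/
def canI (Γ : Set (Fm ℕ)) (Q : ℕ) : Set (List ℕ) :=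
  {us | Fm.pred Q (us.map Sum.inr) ∈ Γ}

/-- The evidence function of the canonical model determined by `Γ`:
`E(t) = { A | ¬ t:_{Par(A)} A ∉ Γ }`. -/
def canE (Γ : Set (Fm ℕ)) (t : Tm) : Set (Fm ℕ) :=
  {A | Fm.neg (Fm.just t (A.kocc.image Sum.inr) A) ∉ Γ}
/-!
Suppose `¬t:_{Par(A(u))} A(u) ∈ Γ`. On any branch containing it, rule (Ins) adds
`¬t:_{Par(A(u))} A`, and this is `¬t:_{Par(A)} A` unless `u` is a new parameter of `A(u)`,
in which case rule (Exp) removes `u` from the subscript. Since `¬t:_{Par(A)} A ∉ Γ`, maximality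
gives a closed tableau for `¬t:_{Par(A)} A` together with finitely many members of `Γ`, and the
two rules turn it into a closed tableau for a finite subset of `Γ`.

Gluing tableaux together needs weakening: a closed tableau for `S` yields one for every finite
`T ⊇ S`. Rules (T∃) and (F∀) ask for a parameter new to the branch, so the one used for `S` is
swapped with a parameter new to `T`; this is harmless because closed tableaux are invariant under
injective renamings of parameters.
-/

namespace Fm

variable {K K' K'' : Type}

theorem kmap_kmap (f : K → K') (g : K' → K'') (A : Fm K) :
    (A.kmap f).kmap g = A.kmap (g ∘ f) := by
  induction A <;> simp [kmap, Sum.map_comp_map, Finset.image_image, *]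

theorem kmap_id (A : Fm K) : A.kmap id = A := by
  induction A <;> simp [kmap, Sum.map_id_id, *]

theorem kmap_congr {f g : K → K'} (A : Fm K) (h : ∀ a ∈ A.kocc, f a = g a) :
    A.kmap f = A.kmap g := by
  induction A with
  | pred Q args =>
    simp only [kmap, pred.injEq, true_and]
    refine List.map_congr_left fun a ha => ?_
    cases a <;> simp_all [kocc]
  | just t X A ih =>
    simp only [kmap, kocc, Finset.mem_union, List.mem_toFinset, List.mem_filterMap,
      Finset.mem_toList] at h ⊢
    rw [ih fun a ha => h a (Or.inl ha)]
    congr 1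
    refine Finset.image_congr fun s hs => ?_
    cases s <;> simp_all
  | _ => simp_all [kmap, kocc]

theorem kmap_eq_self {f : K → K} {A : Fm K} (h : ∀ a ∈ A.kocc, f a = a) : A.kmap f = A :=
  (A.kmap_congr h).trans A.kmap_id

theorem kocc_kmap (f : K → K') (A : Fm K) : (A.kmap f).kocc = A.kocc.image f := by
  induction A with
  | pred Q args =>
    ext v
    simp [kmap, kocc, Sum.exists]
  | just t X A ih =>
    ext v
    simp [kmap, kocc, ih, Finset.image_union, Sum.exists]
  | _ => simp_all [kmap, kocc, Finset.image_union]

theorem fvar_kmap (f : K → K') (A : Fm K) : (A.kmap f).fvar = A.fvar := by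
  induction A with
  | pred Q args =>
    ext v
    simp [kmap, fvar]
  | just t X A ih =>
    ext v
    simp [kmap, fvar]
  | _ => simp_all [kmap, fvar]

theorem kmap_msubst (f : K → K') (σ : ℕ → Option K) (A : Fm K) :
    (A.msubst σ).kmap f = (A.kmap f).msubst fun y => (σ y).map f := by
  induction A generalizing σ with
  | pred Q args =>
    simp only [msubst, kmap, List.map_map, pred.injEq, true_and]
    refine List.map_congr_left fun a _ => ?_
    rcases a with x | a
    · cases h : σ x <;> simp [subK, h]
    · simp [subK]
  | just t X A ih =>
    simp only [msubst, kmap, ih, Finset.image_image, just.injEq, true_and]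
    constructor
    · refine Finset.image_congr fun s _ => ?_
      rcases s with x | a
      · cases h : σ x <;> simp [subK, h]
      · simp [subK]
    · congr 1
      funext y
      by_cases h : Sum.inl y ∈ X <;> simp [h, Sum.exists]
  | _ => simp_all [msubst, kmap, apply_ite]

theorem kmap_subst1 (f : K → K') (x : ℕ) (a : K) (A : Fm K) :
    (A.subst1 x a).kmap f = (A.kmap f).subst1 x (f a) := by
  simp only [subst1, kmap_msubst, apply_ite, Option.map_some, Option.map_none]

theorem kmap_univClosure (f : K → K') (A : Fm K) :
    A.univClosure.kmap f = (A.kmap f).univClosure := by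
  simp only [univClosure, fvar_kmap]
  induction A.fvar.sort (· ≤ ·) <;> simp [kmap, *]

theorem kmap_toK (f : K → K') (A : Fm Empty) : (toK A : Fm K).kmap f = toK A := by
  simp only [toK, kmap_kmap]
  exact congrArg A.kmap (funext fun a => a.elim)

theorem image_kmap_symm_image_kmap (π : Equiv.Perm K) (T : Set (Fm K)) :
    kmap π.symm '' (kmap π '' T) = T := by
  simp [Set.image_image, kmap_kmap, kmap_id]

theorem kmap_swap_eq_self [DecidableEq K] {u u' : K} {F : Fm K} (hu : u ∉ F.kocc)
    (hu' : u' ∉ F.kocc) : F.kmap (Equiv.swap u u') = F :=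
  kmap_eq_self fun a ha =>
    Equiv.swap_apply_of_ne_of_ne (by rintro rfl; exact hu ha) (by rintro rfl; exact hu' ha)

theorem insert_subset_image_kmap_swap [DecidableEq K] {S T : Set (Fm K)} (hST : S ⊆ T)
    {u u' : K} (hu : ∀ F ∈ S, u ∉ F.kocc) (hu' : ∀ F ∈ T, u' ∉ F.kocc) {F F' : Fm K}
    (hF : F'.kmap (Equiv.swap u u') = F) :
    insert F S ⊆ kmap (Equiv.swap u u') '' insert F' T :=
  Set.insert_subset ⟨F', Set.mem_insert _ _, hF⟩ fun G hG =>
    ⟨G, Set.mem_insert_of_mem _ (hST hG), kmap_swap_eq_self (hu G hG) (hu' G (hST hG))⟩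

theorem exists_fresh [Infinite K] {T : Set (Fm K)} (hT : T.Finite) :
    ∃ u, ∀ F ∈ T, u ∉ F.kocc := by
  obtain ⟨u, hu⟩ := (hT.biUnion fun F _ => F.kocc.finite_toSet).infinite_compl.nonempty
  exact ⟨u, fun F hF hmem => hu (Set.mem_biUnion hF hmem)⟩

theorem kocc_subset_kocc_msubst (σ : ℕ → Option K) (A : Fm K) :
    A.kocc ⊆ (A.msubst σ).kocc := by
  induction A generalizing σ with
  | pred Q args =>
    intro v
    simp only [kocc, msubst, List.mem_toFinset, List.mem_filterMap, List.mem_map]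
    rintro ⟨s, hs, he⟩
    exact ⟨s, ⟨s, hs, by cases s <;> simp_all [subK]⟩, he⟩
  | just t X A ih =>
    intro v
    simp only [msubst, kocc, Finset.mem_union, List.mem_toFinset, List.mem_filterMap,
      Finset.mem_toList, Finset.mem_image]
    rintro (h | ⟨s, hs, he⟩)
    · exact Or.inl (ih _ h)
    · exact Or.inr ⟨s, ⟨s, hs, by cases s <;> simp_all [subK]⟩, he⟩
  | _ => simp_all [msubst, kocc, Finset.union_subset_union]

theorem mem_kocc_or_of_mem_kocc_msubst (σ : ℕ → Option K) (A : Fm K) {v : K}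
    (hv : v ∈ (A.msubst σ).kocc) : v ∈ A.kocc ∨ ∃ y, σ y = some v := by
  induction A generalizing σ with
  | pred Q args =>
    simp only [msubst, kocc, List.mem_toFinset, List.mem_filterMap, List.mem_map] at hv ⊢
    obtain ⟨_, ⟨s, hs, rfl⟩, he⟩ := hv
    rcases s with y | a
    · cases h : σ y with
      | none => simp [subK, h] at he
      | some b =>
        simp only [subK, h, Option.elim_some, Sum.getRight?_inr, Option.some.injEq] at he
        exact Or.inr ⟨y, he ▸ h⟩
    · simp_all [subK]
  | neg A ih => exact ih σ hv
  | imp A B ihA ihB =>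
    simp only [msubst, kocc, Finset.mem_union] at hv ⊢
    rcases hv with h | h
    · exact (ihA σ h).imp_left Or.inl
    · exact (ihB σ h).imp_left Or.inr
  | all x A ih | ex x A ih =>
    rcases ih _ hv with h | ⟨y, hy⟩
    · exact Or.inl h
    · split_ifs at hy
      exact Or.inr ⟨y, hy⟩
  | just t X A ih =>
    simp only [msubst, kocc, Finset.mem_union, List.mem_toFinset, List.mem_filterMap,
      Finset.mem_toList, Finset.mem_image] at hv ⊢
    rcases hv with h | ⟨_, ⟨s, hs, rfl⟩, he⟩
    · rcases ih _ h with h | ⟨y, hy⟩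
      · exact Or.inl (Or.inl h)
      · split_ifs at hy
        exact Or.inr ⟨y, hy⟩
    · rcases s with y | a
      · cases h : σ y with
        | none => simp [subK, h] at he
        | some b =>
          simp only [subK, h, Option.elim_some, Sum.getRight?_inr, Option.some.injEq] at he
          exact Or.inr ⟨y, he ▸ h⟩
      · simp_all [subK]

theorem kocc_subst1_eq_or [DecidableEq K] (x : ℕ) (u : K) (A : Fm K) :
    (A.subst1 x u).kocc = A.kocc ∨ (A.subst1 x u).kocc = insert u A.kocc := by
  have hsup : A.kocc ⊆ (A.subst1 x u).kocc := kocc_subset_kocc_msubst _ A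
  have hsub : (A.subst1 x u).kocc ⊆ insert u A.kocc := fun v hv => by
    rcases mem_kocc_or_of_mem_kocc_msubst _ A hv with h | ⟨y, hy⟩
    · exact Finset.mem_insert_of_mem h
    · split_ifs at hy
      simp_all
  by_cases hu : u ∈ (A.subst1 x u).kocc
  · exact Or.inr (hsub.antisymm (Finset.insert_subset hu hsup))
  · refine Or.inl (hsup.antisymm' fun v hv => ?_)
    exact (Finset.mem_insert.1 (hsub hv)).resolve_left (by rintro rfl; exact hu hv)

theorem closed_neg_just_image_inr [DecidableEq K] (t : Tm) (P : Finset K) (A : Fm K) :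
    (neg (just t (P.image Sum.inr) A)).Closed := by
  simp [Closed, fvar]

end Fm

theorem XPar.image_inr (P : Finset ℕ) : XPar (P.image Sum.inr) := by
  simp [XPar]

-- The decidability instance is left implicit because `Fm.kmap` builds its finsets with the
-- classical one, which is not the instance synthesized for `ℕ ⊕ ℕ`.
theorem XPar.image_sumMap {_ : DecidableEq (ℕ ⊕ ℕ)} {X : Finset (ℕ ⊕ ℕ)} (hX : XPar X)
    (f : ℕ → ℕ) : XPar (X.image (Sum.map id f)) := by
  simp only [XPar, Finset.mem_image, forall_exists_index, and_imp]
  rintro _ s hs rfl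
  obtain ⟨u, rfl⟩ := hX s hs
  exact ⟨f u, rfl⟩

namespace TabRule

variable {S T : Set (Fm ℕ)} {l : List (Set (Fm ℕ))}

theorem image_kmap {π : ℕ → ℕ} (hπ : Function.Injective π) (h : TabRule S l) :
    TabRule (Fm.kmap π '' S) (l.map (Fm.kmap π '' ·)) := by
  have mem : ∀ {F}, F ∈ S → F.kmap π ∈ Fm.kmap π '' S := Set.mem_image_of_mem _
  have fresh : ∀ {u}, (∀ F ∈ S, u ∉ F.kocc) →
      ∀ F ∈ Fm.kmap π '' S, π u ∉ F.kocc := by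
    rintro u hu _ ⟨F, hF, rfl⟩
    simpa [Fm.kocc_kmap, hπ.eq_iff] using hu F hF
  cases h with
  | fneg h => simpa [Set.image_insert_eq, Fm.kmap] using fneg (mem h)
  | timp h => simpa [Set.image_insert_eq, Fm.kmap] using timp (mem h)
  | fimp h => simpa [Set.image_insert_eq, Fm.kmap] using fimp (mem h)
  | tall u h => simpa [Set.image_insert_eq, Fm.kmap_subst1] using tall (π u) (mem h)
  | fex u h => simpa [Set.image_insert_eq, Fm.kmap, Fm.kmap_subst1] using fex (π u) (mem h)
  | tex u h hu =>
    simpa [Set.image_insert_eq, Fm.kmap_subst1] using tex (π u) (mem h) (fresh hu)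
  | fall u h hu =>
    simpa [Set.image_insert_eq, Fm.kmap, Fm.kmap_subst1] using fall (π u) (mem h) (fresh hu)
  | tcolon h hX =>
    simpa [Set.image_insert_eq, Fm.kmap_univClosure] using tcolon (mem h) (hX.image_sumMap π)
  | fplus h hX => simpa [Set.image_insert_eq, Fm.kmap] using fplus (mem h) (hX.image_sumMap π)
  | fapp A h hX hA =>
    simpa [Set.image_insert_eq, Fm.kmap] using fapp (A.kmap π) (mem h) (hX.image_sumMap π)
      (by simpa [Fm.kocc_kmap] using fun u hu => ⟨_, hA u hu, rfl⟩)
  | fbang h hX => simpa [Set.image_insert_eq, Fm.kmap] using fbang (mem h) (hX.image_sumMap π)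
  | ctr u h hX hu =>
    convert ctr (π u) (mem h) (hX.image_sumMap π) (by simpa [hπ.eq_iff] using hu) using 4
    simp only [List.map_cons, List.map_nil, Set.image_insert_eq, Fm.kmap, Finset.image_insert,
      Sum.map_inr, List.cons.injEq, and_true]
    congr!
  | exp u h hX hu huA =>
    simpa [Set.image_insert_eq, Fm.kmap] using
      exp (π u) (by
        convert mem h using 3
        simp only [Fm.kmap, Finset.image_insert, Sum.map_inr, Fm.neg.injEq, Fm.just.injEq,
          and_true, true_and]
        congr!)
        (hX.image_sumMap π) (by simpa [hπ.eq_iff] using hu)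
        (by simpa [Fm.kocc_kmap, hπ.eq_iff] using huA)
  | ins x u h hX =>
    simpa [Set.image_insert_eq, Fm.kmap] using
      ins x (π u) (by simpa [Fm.kmap, Fm.kmap_subst1] using mem h) (hX.image_sumMap π)
  | genx h hX => simpa [Set.image_insert_eq, Fm.kmap] using genx (mem h) (hX.image_sumMap π)

theorem finite (h : TabRule S l) (hS : S.Finite) : ∀ S' ∈ l, S'.Finite := by
  cases h <;> simp [hS.insert, (hS.insert _).insert]

theorem exists_of_subset (h : TabRule S l) (hST : S ⊆ T) (hT : T.Finite) :
    ∃ l', TabRule T l' ∧ ∀ T' ∈ l', T'.Finite ∧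
      ∃ S' ∈ l, ∃ π : Equiv.Perm ℕ, S' ⊆ Fm.kmap π '' T' := by
  have lift : TabRule T (l.map (· ∪ T)) → ∃ l', TabRule T l' ∧ ∀ T' ∈ l', T'.Finite ∧
      ∃ S' ∈ l, ∃ π : Equiv.Perm ℕ, S' ⊆ Fm.kmap π '' T' := fun h' =>
    ⟨_, h', by
      simp only [List.mem_map, forall_exists_index, and_imp, forall_apply_eq_imp_iff₂]
      exact fun S' hS' => ⟨(h.finite (hT.subset hST) S' hS').union hT, S', hS', 1,
        by simp [Fm.kmap_id]⟩⟩
  have hU : S ∪ T = T := Set.union_eq_right.2 hST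
  cases h with
  | fneg h => exact lift (by simpa [Set.insert_union, hU] using fneg (hST h))
  | timp h => exact lift (by simpa [Set.insert_union, hU] using timp (hST h))
  | fimp h => exact lift (by simpa [Set.insert_union, hU] using fimp (hST h))
  | tall u h => exact lift (by simpa [Set.insert_union, hU] using tall u (hST h))
  | fex u h => exact lift (by simpa [Set.insert_union, hU] using fex u (hST h))
  | @tex x A u h hu =>
    obtain ⟨u', hu'⟩ := Fm.exists_fresh hT
    refine ⟨_, tex u' (hST h) hu', ?_⟩
    simp only [List.mem_singleton, forall_eq, exists_eq_left]
    refine ⟨hT.insert _, Equiv.swap u u', Fm.insert_subset_image_kmap_swap hST hu hu' ?_⟩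
    rw [Fm.kmap_subst1, Fm.kmap_swap_eq_self (F := A) (hu _ h :) (hu' _ (hST h) :),
      Equiv.swap_apply_right]
  | @fall x A u h hu =>
    obtain ⟨u', hu'⟩ := Fm.exists_fresh hT
    refine ⟨_, fall u' (hST h) hu', ?_⟩
    simp only [List.mem_singleton, forall_eq, exists_eq_left]
    refine ⟨hT.insert _, Equiv.swap u u', Fm.insert_subset_image_kmap_swap hST hu hu' ?_⟩
    rw [Fm.kmap, Fm.kmap_subst1, Fm.kmap_swap_eq_self (F := A) (hu _ h :) (hu' _ (hST h) :),
      Equiv.swap_apply_right]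
  | tcolon h hX => exact lift (by simpa [Set.insert_union, hU] using tcolon (hST h) hX)
  | fplus h hX => exact lift (by simpa [Set.insert_union, hU] using fplus (hST h) hX)
  | fapp A h hX hA => exact lift (by simpa [Set.insert_union, hU] using fapp A (hST h) hX hA)
  | fbang h hX => exact lift (by simpa [Set.insert_union, hU] using fbang (hST h) hX)
  | ctr u h hX hu => exact lift (by simpa [Set.insert_union, hU] using ctr u (hST h) hX hu)
  | exp u h hX hu hA =>
    exact lift (by simpa [Set.insert_union, hU] using exp u (hST h) hX hu hA)
  | ins x u h hX => exact lift (by simpa [Set.insert_union, hU] using ins x u (hST h) hX)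
  | genx h hX => exact lift (by simpa [Set.insert_union, hU] using genx (hST h) hX)

end TabRule

namespace ClosedTableau

variable {CS : Set (ℕ × Fm Empty)} {S T : Set (Fm ℕ)}

theorem image_kmap {π : ℕ → ℕ} (hπ : Function.Injective π) (h : ClosedTableau CS S) :
    ClosedTableau CS (Fm.kmap π '' S) := by
  induction h with
  | close hA hnA => exact close (Set.mem_image_of_mem _ hA) (Set.mem_image_of_mem _ hnA)
  | closeCS hc hmem =>
    exact closeCS hc (by simpa [Fm.kmap, Fm.kmap_toK] using Set.mem_image_of_mem (Fm.kmap π) hmem)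
  | step hr _ ih => exact step (hr.image_kmap hπ) (by simpa using ih)

theorem mono (h : ClosedTableau CS S) (hST : S ⊆ T) (hT : T.Finite) : ClosedTableau CS T := by
  induction h generalizing T with
  | close hA hnA => exact close (hST hA) (hST hnA)
  | closeCS hc hmem => exact closeCS hc (hST hmem)
  | step hr _ ih =>
    obtain ⟨l', hr', hl'⟩ := hr.exists_of_subset hST hT
    refine step hr' fun T' hT' => ?_
    obtain ⟨hfin, S', hS', π, hsub⟩ := hl' T' hT'
    simpa [Fm.image_kmap_symm_image_kmap] using
      (ih S' hS' hsub (hfin.image _)).image_kmap π.symm.injective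

theorem of_insert_neg_just_of_subst1_mem (hT : T.Finite) {t : Tm} {A : Fm ℕ} {x u : ℕ}
    (hH : Fm.neg (Fm.just t ((A.subst1 x u).kocc.image Sum.inr) (A.subst1 x u)) ∈ T)
    (h : ClosedTableau CS (insert (Fm.neg (Fm.just t (A.kocc.image Sum.inr) A)) T)) :
    ClosedTableau CS T := by
  refine step (TabRule.ins x u hH (XPar.image_inr _)) ?_
  simp only [List.mem_singleton, forall_eq]
  rcases A.kocc_subst1_eq_or x u with hk | hk
  · rwa [hk]
  by_cases hu : u ∈ A.kocc
  · rwa [hk, Finset.insert_eq_of_mem hu]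
  rw [hk, Finset.image_insert]
  refine step (TabRule.exp u (Set.mem_insert _ _) (XPar.image_inr _) (by simpa using hu) hu) ?_
  simpa using h.mono (Set.insert_subset_insert (Set.subset_insert _ _)) ((hT.insert _).insert _)

end ClosedTableau

theorem MaximalCons.exists_closedTableau_insert {CS : Set (ℕ × Fm Empty)} {Γ : Set (Fm ℕ)}
    (hmax : MaximalCons CS Γ) (hΓ : ∀ F ∈ Γ, F.Closed) {G : Fm ℕ} (hG : G.Closed)
    (hGΓ : G ∉ Γ) : ∃ S ⊆ Γ, S.Finite ∧ ClosedTableau CS (insert G S) := by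
  have hincons : ¬ TabConsistent CS (insert G Γ) := fun hcons =>
    hGΓ (hmax.2 _ (Set.subset_insert _ _) (Set.forall_mem_insert.2 ⟨hG, hΓ⟩) hcons ▸
      Set.mem_insert _ _)
  simp only [TabConsistent, not_forall, not_not] at hincons
  obtain ⟨S, hS, hfin, hclosed⟩ := hincons
  exact ⟨S \ {G}, Set.sdiff_singleton_subset_iff.2 hS, hfin.sdiff,
    hclosed.mono (Set.subset_insert_sdiff_singleton _ _) (hfin.sdiff.insert _)⟩

theorem canonical_E6_general
    (CS : Set (ℕ × Fm Empty))
    (Γ : Set (Fm ℕ)) (hclosed : ∀ F ∈ Γ, F.Closed)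
    (hmax : MaximalCons CS Γ)
    (t : Tm) (A : Fm ℕ) (x u : ℕ)
    (hA : A ∈ canE Γ t) :
    A.subst1 x u ∈ canE Γ t := by
  intro hH
  obtain ⟨S, hSΓ, hSfin, hS⟩ :=
    hmax.exists_closedTableau_insert hclosed (Fm.closed_neg_just_image_inr _ _ _) hA
  exact hmax.1 (insert _ S) (Set.insert_subset hH hSΓ) (hSfin.insert _)
    (.of_insert_neg_just_of_subst1_mem (hSfin.insert _) (Set.mem_insert _ _)
      (hS.mono (Set.insert_subset_insert (Set.subset_insert _ _)) ((hSfin.insert _).insert _)))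

/-- the Instantiation Condition E6 for the canonical evidence
function `E(t) = {A | ¬t:_{Par(A)} A ∉ Γ}`:  if `A(x) ∈ E(t)` and `u` is any
parameter then `A(u) ∈ E(t)`. -/
theorem canonical_E6
    (CS : Set (ℕ × Fm Empty)) (hCS : ConstantSpec CS)
    (Γ : Set (Fm ℕ)) (hclosed : ∀ F ∈ Γ, F.Closed)
    (hmax : MaximalCons CS Γ) (hE : EComplete Γ)
    (t : Tm) (A : Fm ℕ) (x u : ℕ)
    (hA : A ∈ canE Γ t) :
    A.subst1 x u ∈ canE Γ t :=
  canonical_E6_general CS Γ hclosed hmax t A x u hA
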